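/- Let G be an [n,k] Gabidulin code over F_{q^m} with k < n, and let A = Mr_k(a) be a nonzero k×n Moore matrix all of whose rows are codewords of G. Then A has rank k and is therefore a generator matrix of G. -/

import Mathlib

/-!
Let `G_j` be the span of `g, g^{[1]}, …, g^{[j-1]}`. The rows `a^{[s]}`, `s < k`, lie in `G_k`,
and this forces `a ∈ G_1`: if `a = w + μ g^{[j]}` with `w ∈ G_j` and `1 ≤ j < k`, then
`a^{[k-j]} = w^{[k-j]} + μ^{q^{k-j}} g^{[k]}` with `w^{[k-j]} ∈ G_k`, while `g^{[k]} ∉ G_k` as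
`k < n`; so `μ = 0`. Hence `a = c g` with `c ≠ 0`, and `a` is `F_q`-linearly independent.

The rows of `Mr_N(a)` for `N ≤ n` and `F_q`-linearly independent `a` are `K`-linearly independent:
a linear relation among them is a linearized polynomial `∑_{r<N} c_r X^{q^r}` of degree
`< q^N ≤ q^n` vanishing on the `q^n` elements of the `F_q`-span of `a`.
-/

open Polynomial Submodule Module FiniteField

/-- The `k × n` Moore matrix of a vector `a`, with `(i,j)` entry `a j ^ q ^ i`. -/
def mooreMatrix (q k : ℕ) {n : ℕ} {K : Type*} [Field K] (a : Fin n → K) :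
    Matrix (Fin k) (Fin n) K :=
  Matrix.of fun i j => a j ^ q ^ (i : ℕ)

/-- The `[n,k]` Gabidulin code generated by `g`: the row space of the Moore matrix `Mr_k(g)`. -/
def gabidulinCode (q k : ℕ) {n : ℕ} {K : Type*} [Field K] (g : Fin n → K) :
    Submodule K (Fin n → K) :=
  Submodule.span K (Set.range fun i => mooreMatrix q k g i)

noncomputable def linearizedPoly {R : Type*} [Semiring R] (q : ℕ) {N : ℕ} (c : Fin N → R) :
    R[X] :=
  ∑ r, C (c r) * X ^ q ^ (r : ℕ)

section LinearizedPoly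

variable {R : Type*} [Semiring R] {q N : ℕ}

theorem eval_linearizedPoly (c : Fin N → R) (x : R) :
    (linearizedPoly q c).eval x = ∑ r, c r * x ^ q ^ (r : ℕ) := by
  simp [linearizedPoly, eval_finsetSum]

theorem coeff_linearizedPoly_pow (hq : 2 ≤ q) (c : Fin N → R) (i : Fin N) :
    (linearizedPoly q c).coeff (q ^ (i : ℕ)) = c i := by
  have hinj : Function.Injective fun r : Fin N => q ^ (r : ℕ) :=
    (Nat.pow_right_injective hq).comp Fin.val_injective
  simp [linearizedPoly, finsetSum_coeff, hinj.eq_iff]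

theorem natDegree_linearizedPoly_lt (hq : 2 ≤ q) (c : Fin N → R) :
    (linearizedPoly q c).natDegree < q ^ N := by
  cases N with
  | zero => simp [linearizedPoly]
  | succ N =>
    refine lt_of_le_of_lt (natDegree_sum_le_of_forall_le _ _ fun r _ => ?_)
      (Nat.pow_lt_pow_right hq N.lt_succ_self)
    exact (natDegree_C_mul_X_pow_le _ _).trans (Nat.pow_le_pow_right (by omega) (by omega))

end LinearizedPoly

section FiniteField

variable {Fq : Type*} [Field Fq] [Fintype Fq]

theorem frobeniusAlgHom_pow_apply (R : Type*) [CommRing R] [Algebra Fq R] (s : ℕ) (x : R) :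
    (frobeniusAlgHom Fq R ^ s) x = x ^ Fintype.card Fq ^ s := by
  rw [AlgHom.coe_pow, coe_frobeniusAlgHom, pow_iterate]

theorem add_pow_card_pow {R : Type*} [CommRing R] [Algebra Fq R] (x y : R) (s : ℕ) :
    (x + y) ^ Fintype.card Fq ^ s = x ^ Fintype.card Fq ^ s + y ^ Fintype.card Fq ^ s := by
  simpa only [frobeniusAlgHom_pow_apply] using map_add (frobeniusAlgHom Fq R ^ s) x y

variable {K : Type*} [Field K] [Algebra Fq K]

theorem eval_linearizedPoly_eq_zero_of_mem_span {ι : Type*} {v : ι → K} {N : ℕ}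
    {c : Fin N → K}
    (hv : ∀ j, (linearizedPoly (Fintype.card Fq) c).eval (v j) = 0) {x : K}
    (hx : x ∈ span Fq (Set.range v)) : (linearizedPoly (Fintype.card Fq) c).eval x = 0 := by
  let L : K →ₗ[Fq] K := ∑ r, c r • (frobeniusAlgHom Fq K ^ (r : ℕ)).toLinearMap
  have hL : ∀ y, L y = (linearizedPoly (Fintype.card Fq) c).eval y := fun y => by
    simp only [L, LinearMap.coe_sum, Finset.sum_apply, LinearMap.smul_apply,
      AlgHom.toLinearMap_apply, frobeniusAlgHom_pow_apply, smul_eq_mul, eval_linearizedPoly]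
  have hker : span Fq (Set.range v) ≤ LinearMap.ker L :=
    span_le.2 <| Set.range_subset_iff.2 fun j => by simp [hL, hv j]
  simpa [hL] using hker hx

theorem linearIndependent_mooreMatrix {n N : ℕ} {g : Fin n → K} (hg : LinearIndependent Fq g)
    (hN : N ≤ n) : LinearIndependent K (mooreMatrix (Fintype.card Fq) N g) := by
  set q := Fintype.card Fq
  have hq : 2 ≤ q := Fintype.one_lt_card
  refine Fintype.linearIndependent_iff.2 fun c hc => ?_
  have hroots : ∀ j, (linearizedPoly q c).eval (g j) = 0 := fun j => by
    simpa [eval_linearizedPoly, mooreMatrix, Finset.sum_apply] using congrFun hc j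
  let S := span Fq (Set.range g)
  have : Module.Finite Fq S := FiniteDimensional.span_of_finite Fq (Set.finite_range g)
  have : Fintype S := @Fintype.ofFinite _ (Module.finite_of_finite Fq)
  have hcard : Fintype.card S = q ^ n := by
    rw [card_eq_pow_finrank (K := Fq), finrank_span_eq_card hg, Fintype.card_fin]
  have hP : linearizedPoly q c = 0 :=
    eq_zero_of_natDegree_lt_card_of_eval_eq_zero _ Subtype.val_injective
      (fun x : S => eval_linearizedPoly_eq_zero_of_mem_span hroots x.2) <| by
        rw [hcard]
        exact (natDegree_linearizedPoly_lt hq c).trans_le (Nat.pow_le_pow_right (by omega) hN)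
  intro i
  rw [← coeff_linearizedPoly_pow hq c i, hP, coeff_zero]

end FiniteField

section Gabidulin

variable {K : Type*} [Field K] {n : ℕ} (g : Fin n → K)

theorem mooreMatrix_row (q k : ℕ) (i : Fin k) : mooreMatrix q k g i = g ^ q ^ (i : ℕ) := rfl

theorem gabidulinCode_zero (q : ℕ) : gabidulinCode q 0 g = ⊥ := by
  simp [gabidulinCode]

theorem gabidulinCode_succ (q k : ℕ) :
    gabidulinCode q (k + 1) g = K ∙ (g ^ q ^ k) ⊔ gabidulinCode q k g := by
  rw [gabidulinCode, gabidulinCode, ← span_insert]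
  congr 1
  ext v
  simp [Fin.exists_fin_succ', mooreMatrix_row, eq_comm (a := v), or_comm]

theorem gabidulinCode_one (q : ℕ) : gabidulinCode q 1 g = K ∙ g := by
  simp [gabidulinCode_succ, gabidulinCode_zero]

variable {Fq : Type*} [Field Fq] [Fintype Fq] [Algebra Fq K] {g}

theorem pow_mem_gabidulinCode {k : ℕ} {w : Fin n → K}
    (hw : w ∈ gabidulinCode (Fintype.card Fq) k g) (s : ℕ) :
    w ^ Fintype.card Fq ^ s ∈ gabidulinCode (Fintype.card Fq) (k + s) g := by
  induction hw using span_induction with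
  | mem x hx =>
    obtain ⟨i, rfl⟩ := hx
    simp only [mooreMatrix_row, ← pow_mul, ← pow_add]
    exact subset_span ⟨⟨i + s, by omega⟩, rfl⟩
  | zero => simp
  | add x y _ _ hx hy =>
    rw [add_pow_card_pow]
    exact add_mem hx hy
  | smul c x _ hx =>
    rw [_root_.smul_pow]
    exact smul_mem _ _ hx

theorem pow_card_pow_notMem_gabidulinCode (hg : LinearIndependent Fq g) {k : ℕ} (hkn : k < n) :
    g ^ Fintype.card Fq ^ k ∉ gabidulinCode (Fintype.card Fq) k g :=
  (linearIndependent_finSucc'.1 (linearIndependent_mooreMatrix hg hkn)).2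

theorem mem_gabidulinCode_of_pow_mem (hg : LinearIndependent Fq g) {j s : ℕ} (hn : j + s < n)
    {a : Fin n → K} (ha : a ∈ gabidulinCode (Fintype.card Fq) (j + 1) g)
    (has : a ^ Fintype.card Fq ^ s ∈ gabidulinCode (Fintype.card Fq) (j + s) g) :
    a ∈ gabidulinCode (Fintype.card Fq) j g := by
  set q := Fintype.card Fq
  rw [gabidulinCode_succ, mem_sup] at ha
  obtain ⟨_, hy, w, hw, rfl⟩ := ha
  obtain ⟨μ, rfl⟩ := mem_span_singleton.1 hy
  have hlead : μ ^ q ^ s • g ^ q ^ (j + s) ∈ gabidulinCode q (j + s) g := by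
    have := sub_mem has (pow_mem_gabidulinCode hw s)
    rwa [add_pow_card_pow, add_sub_cancel_right, _root_.smul_pow, ← pow_mul, ← pow_add] at this
  obtain rfl : μ = 0 := by
    by_contra hμ
    exact pow_card_pow_notMem_gabidulinCode hg hn
      ((smul_mem_iff _ (pow_ne_zero _ hμ)).1 hlead)
  simpa using hw

theorem mem_gabidulinCode_one_of_forall_pow_mem (hg : LinearIndependent Fq g) {k : ℕ}
    (hk : 0 < k) (hkn : k < n) {a : Fin n → K}
    (h : ∀ s < k, a ^ Fintype.card Fq ^ s ∈ gabidulinCode (Fintype.card Fq) k g) :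
    a ∈ gabidulinCode (Fintype.card Fq) 1 g := by
  have descend : ∀ i < k, a ∈ gabidulinCode (Fintype.card Fq) (k - i) g := by
    intro i
    induction i with
    | zero => exact fun _ => by simpa using h 0 hk
    | succ i ih =>
      intro hi
      refine mem_gabidulinCode_of_pow_mem hg (s := i + 1) (by omega) ?_ ?_
      · convert ih (by omega) using 2
        omega
      · convert h (i + 1) hi using 2
        omega
  simpa [Nat.sub_sub_self hk] using descend (k - 1) (by omega)

theorem rank_mooreMatrix (hg : LinearIndependent Fq g) {k : ℕ} (hkn : k ≤ n) :
    (mooreMatrix (Fintype.card Fq) k g).rank = k := by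
  rw [Matrix.rank_eq_finrank_span_row]
  exact (finrank_span_eq_card (linearIndependent_mooreMatrix hg hkn)).trans (Fintype.card_fin k)

end Gabidulin

theorem moore_rows_in_gabidulin_general (Fq K : Type*) [Field Fq] [Fintype Fq] [Field K]
    [Algebra Fq K] (n k : ℕ)
    (hk : 0 < k) (hkn : k < n)
    (g : Fin n → K) (hg : LinearIndependent Fq g)
    (a : Fin n → K) (hA : mooreMatrix (Fintype.card Fq) k a ≠ 0)
    (hrows : ∀ i : Fin k,
      mooreMatrix (Fintype.card Fq) k a i ∈ gabidulinCode (Fintype.card Fq) k g) :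
    (mooreMatrix (Fintype.card Fq) k a).rank = k ∧
    Submodule.span K (Set.range fun i => mooreMatrix (Fintype.card Fq) k a i)
      = gabidulinCode (Fintype.card Fq) k g := by
  obtain ⟨c, rfl⟩ := mem_span_singleton.1 <| gabidulinCode_one g _ ▸
    mem_gabidulinCode_one_of_forall_pow_mem hg hk hkn fun s hs => hrows ⟨s, hs⟩
  have hc : c ≠ 0 := by
    rintro rfl
    exact hA (by ext i j; simp [mooreMatrix])
  have hca : LinearIndependent Fq (c • g) :=
    hg.map' (LinearMap.mulLeft Fq c) (LinearMap.ker_eq_bot.2 (mul_right_injective₀ hc))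
  refine ⟨rank_mooreMatrix hca hkn.le,
    eq_of_le_of_finrank_le (span_le.2 (Set.range_subset_iff.2 hrows)) ?_⟩
  rw [finrank_span_eq_card (linearIndependent_mooreMatrix hca hkn.le)]
  exact finrank_range_le_card _

/-- Let `G` be an `[n,k]` Gabidulin code over `F_{q^m}` with `k < n`, and let `A = Mr_k(a)` be
a nonzero `k × n` Moore matrix all of whose rows are codewords of `G`.  Then `A` has rank `k`
and is therefore a generator matrix of `G`. -/
theorem moore_rows_in_gabidulin (Fq K : Type*) [Field Fq] [Fintype Fq] [Field K]
    [Algebra Fq K] [Fintype K] (m n k : ℕ)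
    (hcard : Fintype.card K = Fintype.card Fq ^ m)
    (hk : 0 < k) (hkn : k < n) (hnm : n ≤ m)
    (g : Fin n → K) (hg : LinearIndependent Fq g)
    (a : Fin n → K) (hA : mooreMatrix (Fintype.card Fq) k a ≠ 0)
    (hrows : ∀ i : Fin k,
      mooreMatrix (Fintype.card Fq) k a i ∈ gabidulinCode (Fintype.card Fq) k g) :
    (mooreMatrix (Fintype.card Fq) k a).rank = k ∧
    Submodule.span K (Set.range fun i => mooreMatrix (Fintype.card Fq) k a i)
      = gabidulinCode (Fintype.card Fq) k g :=
  moore_rows_in_gabidulin_general Fq K n k hk hkn g hg a hA hrows
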